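/- Let G be a group acting linearly on finite-dimensional k-vector spaces W and V with n = dim V, and let m ≥ 2n. If two points v = (w, v₁, …, v_m) and v' = (w', v₁', …, v_m') of W ⊕ V^m can be separated by a G-invariant polynomial, then there exist indices 1 ≤ i₁ < … < i_{2n} ≤ m such that (w, v_{i₁}, …, v_{i_{2n}}) and (w', v_{i₁}', …, v_{i_{2n}}') can be separated by a G-invariant polynomial on W ⊕ V^{2n}. -/

import Mathlib

open scoped Pointwise

/-- A function `f : U → k` is a polynomial function if it lies in the `k`-subalgebra of
`U → k` generated by the linear functionals on `U`. -/
def IsPolyFun (k : Type) [Field k] {U : Type} [AddCommGroup U] [Module k U]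
    (f : U → k) : Prop :=
  f ∈ Algebra.adjoin k (Set.range fun φ : U →ₗ[k] k => ⇑φ)

/-- Two points of a `G`-module `U` can be separated by polynomial invariants. -/
def CanSep (k G : Type) [Field k] [Group G] {U : Type} [AddCommGroup U] [Module k U]
    [MulAction G U] (a b : U) : Prop :=
  ∃ f : U → k, IsPolyFun k f ∧ (∀ (g : G) (x : U), f (g • x) = f x) ∧ f a ≠ f b

/-!
The pairs `(vᵢ, vᵢ')` lie in `V × V`, of dimension `2n`, so some `2n` of them, say those indexed
by `ι`, span all of them: `(vⱼ, vⱼ') = ∑ₗ cⱼₗ • (v_{ι l}, v'_{ι l})`. The substitution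
`u ↦ (∑ₗ cⱼₗ • u_l)ⱼ` from `V^{2n}` to `V^m` is linear and `G`-equivariant and maps `v ∘ ι`, `v' ∘ ι`
to `v`, `v'`; composing a separating invariant with it gives a separating invariant on
`W ⊕ V^{2n}`.
-/

open Module Submodule Set

lemma IsPolyFun.comp_linearMap {k : Type} [Field k] {U U' : Type} [AddCommGroup U]
    [Module k U] [AddCommGroup U'] [Module k U'] {f : U → k} (hf : IsPolyFun k f)
    (Φ : U' →ₗ[k] U) : IsPolyFun k (f ∘ Φ) := by
  let precomp : (U → k) →ₐ[k] (U' → k) := AlgHom.pi fun x => Pi.evalAlgHom k _ (Φ x)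
  have hmap : precomp f ∈ (Algebra.adjoin k (range fun φ : U →ₗ[k] k => ⇑φ)).map precomp :=
    ⟨f, hf, rfl⟩
  rw [AlgHom.map_adjoin] at hmap
  refine Algebra.adjoin_mono ?_ hmap
  rintro _ ⟨_, ⟨φ, rfl⟩, rfl⟩
  exact ⟨φ.comp Φ, rfl⟩

lemma CanSep.of_map {k G : Type} [Field k] [Group G] {U U' : Type} [AddCommGroup U]
    [Module k U] [MulAction G U] [AddCommGroup U'] [Module k U'] [MulAction G U']
    (Φ : U' →ₗ[k] U) (hΦ : ∀ (g : G) x, Φ (g • x) = g • Φ x) {a b : U'}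
    (h : CanSep k G (Φ a) (Φ b)) : CanSep k G a b := by
  obtain ⟨f, hf, hinv, hne⟩ := h
  exact ⟨f ∘ Φ, hf.comp_linearMap Φ, fun g x => by simp [hΦ, hinv], hne⟩

lemma exists_strictMono_span_range_comp_eq {K E : Type*} [DivisionRing K] [AddCommGroup E]
    [Module K E] [FiniteDimensional K E] {m r : ℕ} (hr : finrank K E ≤ r) (hrm : r ≤ m)
    (p : Fin m → E) :
    ∃ ι : Fin r → Fin m, StrictMono ι ∧ span K (range (p ∘ ι)) = span K (range p) := by
  classical
  obtain ⟨κ, a, ha, hspan, hli⟩ := exists_linearIndependent' K p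
  have : Fintype κ := Fintype.ofInjective a ha
  obtain ⟨s, has, hs⟩ := Finset.exists_superset_card_eq (s := Finset.univ.image a) (n := r)
    (by rw [Finset.card_image_of_injective _ ha, Finset.card_univ]
        exact hli.fintype_card_le_finrank.trans hr)
    (by simpa using hrm)
  refine ⟨s.orderEmbOfFin hs, (s.orderEmbOfFin hs).strictMono,
    le_antisymm (span_mono (range_comp_subset_range _ _)) ?_⟩
  rw [← hspan, range_comp, range_comp, Finset.range_orderEmbOfFin]
  exact span_mono (image_mono fun i ⟨j, hj⟩ => has (by simp [← hj]))

section linearSubst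

variable {R M ι κ : Type*} [CommSemiring R] [AddCommMonoid M] [Module R M] [Fintype κ]

def linearSubst (c : ι → κ → R) : (κ → M) →ₗ[R] (ι → M) :=
  LinearMap.pi fun i => ∑ j, c i j • LinearMap.proj (R := R) (φ := fun _ : κ => M) j

@[simp]
lemma linearSubst_apply (c : ι → κ → R) (u : κ → M) (i : ι) :
    linearSubst c u i = ∑ j, c i j • u j := by
  simp [linearSubst]

lemma linearSubst_smul {G : Type*} [Monoid G] [DistribMulAction G M] [SMulCommClass G R M]
    (c : ι → κ → R) (g : G) (u : κ → M) : linearSubst c (g • u) = g • linearSubst c u := by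
  ext i
  simp [Finset.smul_sum, smul_comm g]

end linearSubst

theorem separated_by_two_n_variables_general
    {k G W V : Type} [Field k] [Group G]
    [AddCommGroup W] [Module k W]
    [AddCommGroup V] [Module k V] [FiniteDimensional k V]
    [DistribMulAction G W]
    [DistribMulAction G V] [SMulCommClass G k V]
    {m : ℕ} (hm : 2 * Module.finrank k V ≤ m)
    (w w' : W) (v v' : Fin m → V)
    (hsep : CanSep k G ((w, v) : W × (Fin m → V)) (w', v')) :
    ∃ ι : Fin (2 * Module.finrank k V) → Fin m, StrictMono ι ∧
      CanSep k G ((w, v ∘ ι) : W × (Fin (2 * Module.finrank k V) → V)) (w', v' ∘ ι) := by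
  let p : Fin m → V × V := fun i => (v i, v' i)
  obtain ⟨ι, hι, hspan⟩ := exists_strictMono_span_range_comp_eq (K := k)
    (by rw [finrank_prod, two_mul]) hm p
  have hmem j : p j ∈ span k (range (p ∘ ι)) := hspan ▸ subset_span (mem_range_self j)
  choose c hc using fun j => (mem_span_range_iff_exists_fun k).mp (hmem j)
  have hv : linearSubst c (v ∘ ι) = v := funext fun j => by
    simpa [p, Prod.fst_sum] using congrArg Prod.fst (hc j)
  have hv' : linearSubst c (v' ∘ ι) = v' := funext fun j => by
    simpa [p, Prod.snd_sum] using congrArg Prod.snd (hc j)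
  refine ⟨ι, hι, CanSep.of_map ((LinearMap.id : W →ₗ[k] W).prodMap (linearSubst c)) ?_ ?_⟩
  · rintro g ⟨a, u⟩
    simp [linearSubst_smul]
  · simpa [hv, hv'] using hsep

/-- If two points of `W ⊕ V^m` (`m ≥ 2 dim V`) can be separated by a `G`-invariant
polynomial, then they can already be separated by an invariant depending only on `2 dim V`
of the type `V` variables. -/
theorem separated_by_two_n_variables
    {k G W V : Type} [Field k] [Group G]
    [AddCommGroup W] [Module k W] [FiniteDimensional k W]
    [AddCommGroup V] [Module k V] [FiniteDimensional k V]
    [DistribMulAction G W] [SMulCommClass G k W]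
    [DistribMulAction G V] [SMulCommClass G k V]
    {m : ℕ} (hm : 2 * Module.finrank k V ≤ m)
    (w w' : W) (v v' : Fin m → V)
    (hsep : CanSep k G ((w, v) : W × (Fin m → V)) (w', v')) :
    ∃ ι : Fin (2 * Module.finrank k V) → Fin m, StrictMono ι ∧
      CanSep k G ((w, v ∘ ι) : W × (Fin (2 * Module.finrank k V) → V)) (w', v' ∘ ι) :=
  separated_by_two_n_variables_general hm w w' v v' hsep
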